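/- Let A ∈ (C^{n,α})^{m×m}, let B : (C^{n+1,α})^m → ℂ^m be a continuous linear operator, fix t₀ ∈ [a,b], and let Y ∈ (C^{n+1,α})^{m×m} be the matriciant, i.e., the unique solution of Y'(t) = −A(t)Y(t) on [a,b] with Y(t₀) = I_m. Let [BY] be the numerical m×m matrix whose k-th column is the value of B applied to the k-th column of Y. Then the operator (L,B) : (C^{n+1,α})^m → (C^{n,α})^m × ℂ^m, y ↦ (y' + Ay, By), is invertible if and only if det[BY] ≠ 0. -/

import Mathlib

open Set Filter Topology

noncomputable def supIcc (a b : ℝ) (g : ℝ → ℂ) : ℝ :=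
  sSup ((fun t => ‖g t‖) '' Set.Icc a b)

noncomputable def cNorm (a b : ℝ) (l : ℕ) (x : ℝ → ℂ) : ℝ :=
  ∑ j ∈ Finset.range (l + 1), supIcc a b (iteratedDerivWithin j x (Set.Icc a b))

noncomputable def holderSemi (a b α : ℝ) (g : ℝ → ℂ) : ℝ :=
  sSup {r : ℝ | ∃ s ∈ Set.Icc a b, ∃ t ∈ Set.Icc a b, s ≠ t ∧ r = ‖g s - g t‖ / |s - t| ^ α}

noncomputable def holderNorm (a b : ℝ) (l : ℕ) (α : ℝ) (x : ℝ → ℂ) : ℝ :=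
  cNorm a b l x +
    (if α = 0 then 0 else holderSemi a b α (iteratedDerivWithin l x (Set.Icc a b)))

def InHolder (a b : ℝ) (l : ℕ) (α : ℝ) (x : ℝ → ℂ) : Prop :=
  ContDiffOn ℝ l x (Set.Icc a b) ∧
    (α = 0 ∨ ∃ K : ℝ, ∀ s ∈ Set.Icc a b, ∀ t ∈ Set.Icc a b,
      ‖iteratedDerivWithin l x (Set.Icc a b) s - iteratedDerivWithin l x (Set.Icc a b) t‖
        ≤ K * |s - t| ^ α)

def InHolderV (a b : ℝ) (l : ℕ) (α : ℝ) {m : ℕ} (y : ℝ → Fin m → ℂ) : Prop :=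
  ∀ i, InHolder a b l α fun t => y t i

noncomputable def holderNormV (a b : ℝ) (l : ℕ) (α : ℝ) {m : ℕ} (y : ℝ → Fin m → ℂ) : ℝ :=
  ∑ i, holderNorm a b l α fun t => y t i

def InHolderM (a b : ℝ) (l : ℕ) (α : ℝ) {m : ℕ} (A : ℝ → Matrix (Fin m) (Fin m) ℂ) : Prop :=
  ∀ i j, InHolder a b l α fun t => A t i j

noncomputable def holderNormM (a b : ℝ) (l : ℕ) (α : ℝ) {m : ℕ}
    (A : ℝ → Matrix (Fin m) (Fin m) ℂ) : ℝ :=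
  ∑ i, ∑ j, holderNorm a b l α fun t => A t i j

noncomputable def Lop (a b : ℝ) {m : ℕ} (A : ℝ → Matrix (Fin m) (Fin m) ℂ)
    (y : ℝ → Fin m → ℂ) : ℝ → Fin m → ℂ :=
  fun t i => derivWithin (fun s => y s i) (Set.Icc a b) t + (A t).mulVec (y t) i

def SolvesV (a b : ℝ) {m : ℕ} (A : ℝ → Matrix (Fin m) (Fin m) ℂ)
    (y f : ℝ → Fin m → ℂ) : Prop :=
  ∀ t ∈ Set.Icc a b, ∀ i, Lop a b A y t i = f t i

/-!
Every solution of the homogeneous equation `Ly = 0` is `t ↦ Y t *ᵥ y t₀` (uniqueness for linear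
ODEs), so on `ker L` the boundary operator is `y ↦ [BY] y(t₀)`; and variation of constants,
`y = Y ∫ Y⁻¹ f`, gives a particular solution of `Ly = f`. Hence `(L, B)` is bijective exactly when
`[BY]` is invertible. Hölder regularity comes for free: a differentiable solution of
`y' = f - A y` with `f, A ∈ C^{n,α}` gains one derivative at a time, so it lies in `C^{n+1,α}`.
-/

open Matrix

section Holder

variable {a b α : ℝ} {l : ℕ} {x y : ℝ → ℂ}

theorem le_rpow_one_sub_mul_rpow {d D : ℝ} (hd : 0 ≤ d) (hdD : d ≤ D) (hα : α ≤ 1) :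
    d ≤ D ^ (1 - α) * d ^ α := by
  calc d = d ^ (1 - α) * d ^ α := by
        rw [← Real.rpow_add' hd (by norm_num), sub_add_cancel, Real.rpow_one]
    _ ≤ D ^ (1 - α) * d ^ α := by gcongr

theorem InHolder.of_contDiffOn_succ (hab : a < b) (hα : α ≤ 1)
    (h : ContDiffOn ℝ (l + 1) x (Icc a b)) : InHolder a b l α x := by
  have hU := uniqueDiffOn_Icc hab
  refine ⟨h.of_le (by exact_mod_cast l.le_succ), Or.inr ?_⟩
  obtain ⟨C, hC⟩ := isCompact_Icc.exists_bound_of_continuousOn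
    (h.continuousOn_iteratedDerivWithin (m := l + 1) (by norm_cast) hU)
  have hderiv : ∀ u ∈ Icc a b,
      ‖derivWithin (iteratedDerivWithin l x (Icc a b)) (Icc a b) u‖ ≤ C := fun u hu => by
    rw [← iteratedDerivWithin_succ]; exact hC u hu
  have hC0 : 0 ≤ C := (norm_nonneg _).trans (hC a (left_mem_Icc.2 hab.le))
  refine ⟨C * (b - a) ^ (1 - α), fun s hs t ht => ?_⟩
  have hdist : |s - t| ≤ b - a := abs_sub_le_of_le_of_le hs.1 hs.2 ht.1 ht.2
  calc _ ≤ C * ‖s - t‖ := (convex_Icc a b).norm_image_sub_le_of_norm_derivWithin_le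
        (h.differentiableOn_iteratedDerivWithin (by exact_mod_cast l.lt_succ_self) hU) hderiv ht hs
    _ ≤ C * ((b - a) ^ (1 - α) * |s - t| ^ α) := by
        gcongr; exact le_rpow_one_sub_mul_rpow (abs_nonneg _) hdist hα
    _ = _ := by ring

theorem InHolder.of_succ (hab : a < b) (hα : α ≤ 1) (h : InHolder a b (l + 1) α x) :
    InHolder a b l α x :=
  .of_contDiffOn_succ hab hα h.1

theorem InHolder.of_le (hab : a < b) (hα : α ≤ 1) {k : ℕ} (h : InHolder a b l α x)
    (hkl : k ≤ l) : InHolder a b k α x := by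
  induction hkl with
  | refl => exact h
  | step _ ih => exact ih (h.of_succ hab hα)

theorem inHolder_const (hab : a < b) (hα : α ≤ 1) (c : ℂ) : InHolder a b l α fun _ => c :=
  .of_contDiffOn_succ hab hα contDiffOn_const

theorem InHolder.congr (h : InHolder a b l α x) (hxy : EqOn x y (Icc a b)) :
    InHolder a b l α y := by
  refine ⟨h.1.congr hxy.symm, h.2.imp_right fun ⟨K, hK⟩ => ⟨K, fun s hs t ht => ?_⟩⟩
  rw [← iteratedDerivWithin_congr hxy hs, ← iteratedDerivWithin_congr hxy ht]
  exact hK s hs t ht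

theorem InHolder.add (hab : a < b) (hx : InHolder a b l α x) (hy : InHolder a b l α y) :
    InHolder a b l α (x + y) := by
  have hU := uniqueDiffOn_Icc hab
  refine ⟨hx.1.add hy.1, ?_⟩
  rcases hx.2 with h | ⟨Kx, hKx⟩
  · exact .inl h
  rcases hy.2 with h | ⟨Ky, hKy⟩
  · exact .inl h
  refine .inr ⟨Kx + Ky, fun s hs t ht => ?_⟩
  rw [iteratedDerivWithin_add hs hU (hx.1 s hs) (hy.1 s hs),
    iteratedDerivWithin_add ht hU (hx.1 t ht) (hy.1 t ht), add_sub_add_comm, add_mul]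
  exact (norm_add_le _ _).trans (add_le_add (hKx s hs t ht) (hKy s hs t ht))

theorem InHolder.neg (hx : InHolder a b l α x) : InHolder a b l α (-x) := by
  refine ⟨hx.1.neg, hx.2.imp_right fun ⟨K, hK⟩ => ⟨K, fun s hs t ht => ?_⟩⟩
  rw [iteratedDerivWithin_neg, iteratedDerivWithin_neg, neg_sub_neg, norm_sub_rev]
  exact hK s hs t ht

theorem InHolder.sub (hab : a < b) (hx : InHolder a b l α x) (hy : InHolder a b l α y) :
    InHolder a b l α (x - y) := by
  simpa only [sub_eq_add_neg] using hx.add hab hy.neg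

theorem inHolder_succ_iff (hab : a < b) :
    InHolder a b (l + 1) α x ↔
      DifferentiableOn ℝ x (Icc a b) ∧ InHolder a b l α (derivWithin x (Icc a b)) := by
  simp only [InHolder, iteratedDerivWithin_succ', Nat.cast_add, Nat.cast_one,
    contDiffOn_succ_iff_derivWithin (uniqueDiffOn_Icc hab)]
  simp [and_assoc]

theorem InHolder.mul (hab : a < b) (hα : α ≤ 1) (hx : InHolder a b l α x)
    (hy : InHolder a b l α y) : InHolder a b l α (x * y) := by
  induction l generalizing x y with
  | zero =>
    refine ⟨hx.1.mul hy.1, ?_⟩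
    rcases hx.2 with h | ⟨Kx, hKx⟩
    · exact .inl h
    rcases hy.2 with h | ⟨Ky, hKy⟩
    · exact .inl h
    obtain ⟨Cx, hCx⟩ := isCompact_Icc.exists_bound_of_continuousOn hx.1.continuousOn
    obtain ⟨Cy, hCy⟩ := isCompact_Icc.exists_bound_of_continuousOn hy.1.continuousOn
    have hCx0 : 0 ≤ Cx := (norm_nonneg _).trans (hCx a (left_mem_Icc.2 hab.le))
    refine .inr ⟨Cx * Ky + Kx * Cy, fun s hs t ht => ?_⟩
    simp only [iteratedDerivWithin_zero, Pi.mul_apply] at hKx hKy ⊢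
    have hsplit : x s * y s - x t * y t = x s * (y s - y t) + (x s - x t) * y t := by ring
    calc ‖x s * y s - x t * y t‖ ≤ ‖x s‖ * ‖y s - y t‖ + ‖x s - x t‖ * ‖y t‖ := by
          rw [hsplit, ← norm_mul, ← norm_mul]; exact norm_add_le _ _
      _ ≤ Cx * (Ky * |s - t| ^ α) + Kx * |s - t| ^ α * Cy := by
          have hxst := hKx s hs t ht
          gcongr
          exacts [hCx s hs, hKy s hs t ht, (norm_nonneg _).trans hxst, hCy t ht]
      _ = (Cx * Ky + Kx * Cy) * |s - t| ^ α := by ring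
  | succ l ih =>
    obtain ⟨hdx, hx'⟩ := (inHolder_succ_iff hab).1 hx
    obtain ⟨hdy, hy'⟩ := (inHolder_succ_iff hab).1 hy
    refine (inHolder_succ_iff hab).2 ⟨hdx.mul hdy, ?_⟩
    refine ((ih hx' (hy.of_succ hab hα)).add hab (ih (hx.of_succ hab hα) hy')).congr
      fun t ht => ?_
    exact (derivWithin_mul (hdx t ht) (hdy t ht)).symm

theorem inHolder_sum (hab : a < b) (hα : α ≤ 1) {ι : Type*} (s : Finset ι)
    {F : ι → ℝ → ℂ} (h : ∀ i ∈ s, InHolder a b l α (F i)) :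
    InHolder a b l α fun t => ∑ i ∈ s, F i t := by
  classical
  induction s using Finset.induction_on with
  | empty => simpa using inHolder_const hab hα 0
  | insert i s hi ih =>
    simp_rw [Finset.sum_insert hi]
    exact (h i (Finset.mem_insert_self i s)).add hab
      (ih fun j hj => h j (Finset.mem_insert_of_mem hj))

end Holder

section HolderVector

variable {a b α : ℝ} {l m : ℕ} {A : ℝ → Matrix (Fin m) (Fin m) ℂ} {y z : ℝ → Fin m → ℂ}

theorem InHolderV.add (hab : a < b) (hy : InHolderV a b l α y) (hz : InHolderV a b l α z) :
    InHolderV a b l α (y + z) :=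
  fun i => (hy i).add hab (hz i)

theorem InHolderV.sub (hab : a < b) (hy : InHolderV a b l α y) (hz : InHolderV a b l α z) :
    InHolderV a b l α (y - z) :=
  fun i => (hy i).sub hab (hz i)

theorem InHolderV.continuousOn (hy : InHolderV a b l α y) : ContinuousOn y (Icc a b) :=
  continuousOn_pi.2 fun i => (hy i).1.continuousOn

theorem InHolderV.differentiableOn (hy : InHolderV a b (l + 1) α y) :
    DifferentiableOn ℝ y (Icc a b) :=
  differentiableOn_pi.2 fun i => (hy i).1.differentiableOn (by simp)

theorem InHolderM.continuousOn (hA : InHolderM a b l α A) : ContinuousOn A (Icc a b) :=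
  continuousOn_pi.2 fun i => continuousOn_pi.2 fun j => (hA i j).1.continuousOn

theorem InHolderM.mulVec (hab : a < b) (hα : α ≤ 1) (hA : InHolderM a b l α A)
    (hy : InHolderV a b l α y) : InHolderV a b l α fun t => A t *ᵥ y t :=
  fun i => by
    simpa only [mulVec_apply_eq_sum, Pi.mul_apply] using
      inHolder_sum hab hα Finset.univ fun j _ => (hA i j).mul hab hα (hy j)

end HolderVector

theorem ContinuousOn.matrix_mulVec {X R ι κ : Type*} [TopologicalSpace X] [TopologicalSpace R]
    [NonUnitalNonAssocSemiring R] [ContinuousAdd R] [ContinuousMul R] [Fintype κ]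
    {s : Set X} {A : X → Matrix ι κ R} {v : X → κ → R} (hA : ContinuousOn A s)
    (hv : ContinuousOn v s) : ContinuousOn (fun x => A x *ᵥ v x) s :=
  (continuous_fst.matrix_mulVec continuous_snd).comp_continuousOn (hA.prodMk hv)

def BoundedOnHolder (a b : ℝ) (l : ℕ) (α : ℝ) {m : ℕ} {F : Type*} [Norm F]
    (B : (ℝ → Fin m → ℂ) → F) : Prop :=
  ∃ K : ℝ, ∀ y, InHolderV a b l α y → ‖B y‖ ≤ K * holderNormV a b l α y

section HolderNorm

variable {a b α : ℝ} {l : ℕ} {g : ℝ → ℂ}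

theorem supIcc_eq_zero (hab : a ≤ b) (hg : EqOn g 0 (Icc a b)) : supIcc a b g = 0 := by
  rw [supIcc, image_congr fun t ht => by rw [hg ht, Pi.zero_apply, norm_zero],
    (nonempty_Icc.2 hab).image_const, csSup_singleton]

theorem holderSemi_eq_zero (hab : a < b) (hg : EqOn g 0 (Icc a b)) :
    holderSemi a b α g = 0 := by
  have hset : {r : ℝ | ∃ s ∈ Icc a b, ∃ t ∈ Icc a b, s ≠ t ∧
      r = ‖g s - g t‖ / |s - t| ^ α} = {0} := by
    refine eq_singleton_iff_nonempty_unique_mem.2 ⟨?_, ?_⟩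
    · exact ⟨0, a, left_mem_Icc.2 hab.le, b, right_mem_Icc.2 hab.le, hab.ne, by
        simp [hg (left_mem_Icc.2 hab.le), hg (right_mem_Icc.2 hab.le)]⟩
    · rintro r ⟨s, hs, t, ht, -, rfl⟩
      simp [hg hs, hg ht]
  rw [holderSemi, hset, csSup_singleton]

theorem holderNorm_eq_zero (hab : a < b) (hg : EqOn g 0 (Icc a b)) :
    holderNorm a b l α g = 0 := by
  have hd : ∀ j, EqOn (iteratedDerivWithin j g (Icc a b)) 0 (Icc a b) := fun j t ht => by
    rw [iteratedDerivWithin_congr hg ht, Pi.zero_def, iteratedDerivWithin_const]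
    split_ifs <;> rfl
  rw [holderNorm, cNorm, Finset.sum_eq_zero fun j _ => supIcc_eq_zero hab.le (hd j),
    holderSemi_eq_zero hab (hd l), ite_self, add_zero]

theorem BoundedOnHolder.map_eq_zero {m : ℕ} {F : Type*} [NormedAddCommGroup F]
    {B : (ℝ → Fin m → ℂ) → F} (hab : a < b) (hB : BoundedOnHolder a b l α B)
    {y : ℝ → Fin m → ℂ} (hy : InHolderV a b l α y) (hy0 : EqOn y 0 (Icc a b)) : B y = 0 := by
  obtain ⟨K, hK⟩ := hB
  have hnorm : holderNormV a b l α y = 0 :=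
    Finset.sum_eq_zero fun i _ => holderNorm_eq_zero hab fun t ht => congrFun (hy0 ht) i
  simpa [hnorm] using hK y hy

end HolderNorm

theorem inHolderV_succ_of_hasDerivWithinAt {a b α : ℝ} {l m : ℕ} (hab : a < b) (hα : α ≤ 1)
    {A : ℝ → Matrix (Fin m) (Fin m) ℂ} {f y : ℝ → Fin m → ℂ}
    (hA : InHolderM a b l α A) (hf : InHolderV a b l α f)
    (hy : ∀ t ∈ Icc a b, HasDerivWithinAt y (f t - A t *ᵥ y t) (Icc a b) t) :
    InHolderV a b (l + 1) α y := by
  have hU := uniqueDiffOn_Icc hab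
  have hdy : DifferentiableOn ℝ y (Icc a b) := fun t ht => (hy t ht).differentiableWithinAt
  have hy' : EqOn (derivWithin y (Icc a b)) (fun t => f t - A t *ᵥ y t) (Icc a b) :=
    fun t ht => (hy t ht).derivWithin (hU t ht)
  have hbase : InHolderV a b 0 α y := by
    have hC1 : ContDiffOn ℝ (0 + 1) y (Icc a b) := by
      refine (contDiffOn_succ_iff_derivWithin hU).2 ⟨hdy, by simp, contDiffOn_zero.2 ?_⟩
      exact (hf.continuousOn.sub (hA.continuousOn.matrix_mulVec hdy.continuousOn)).congr hy'
    exact fun i => .of_contDiffOn_succ hab hα (contDiffOn_pi.1 (by simpa using hC1) i)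
  have hstep : ∀ k ≤ l, InHolderV a b k α y → InHolderV a b (k + 1) α y := by
    intro k hk hyk i
    refine (inHolder_succ_iff hab).2 ⟨differentiableOn_pi.1 hdy i, ?_⟩
    have hAk : InHolderM a b k α A := fun i j => (hA i j).of_le hab hα hk
    have hfk : InHolderV a b k α f := fun i => (hf i).of_le hab hα hk
    refine ((hfk.sub hab (hAk.mulVec hab hα hyk)) i).congr fun t ht => ?_
    exact ((hasDerivWithinAt_pi.1 (hy t ht) i).derivWithin (hU t ht)).symm
  suffices ∀ k ≤ l + 1, InHolderV a b k α y from this _ le_rfl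
  intro k hk
  induction k with
  | zero => exact hbase
  | succ k ih => exact hstep k (by omega) (ih (by omega))

theorem exists_forall_hasDerivWithinAt_Icc {E : Type*} [NormedAddCommGroup E] [NormedSpace ℝ E]
    [CompleteSpace E] {a b : ℝ} (hab : a ≤ b) {g : ℝ → E} (hg : ContinuousOn g (Icc a b)) :
    ∃ G : ℝ → E, ∀ t ∈ Icc a b, HasDerivWithinAt G (g t) (Icc a b) t := by
  have hext : Continuous (IccExtend hab ((Icc a b).domRestrict g)) := hg.domRestrict.Icc_extend'
  refine ⟨fun t => ∫ s in a..t, IccExtend hab ((Icc a b).domRestrict g) s, fun t ht => ?_⟩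
  have := (hext.integral_hasStrictDerivAt a t).hasDerivAt.hasDerivWithinAt (s := Icc a b)
  rwa [IccExtend_of_mem _ _ ht] at this

section LinearODE

variable {ι : Type*} [Fintype ι]

attribute [local instance] Matrix.linftyOpNormedAddCommGroup in
theorem eqOn_zero_of_hasDerivWithinAt_mulVec {a b t₁ : ℝ} {A : ℝ → Matrix ι ι ℂ}
    (hA : ContinuousOn A (Icc a b)) {z : ℝ → ι → ℂ}
    (hz : ∀ t ∈ Icc a b, HasDerivWithinAt z (A t *ᵥ z t) (Icc a b) t)
    (ht₁ : t₁ ∈ Icc a b) (hz₁ : z t₁ = 0) : EqOn z 0 (Icc a b) := by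
  obtain ⟨C, hC⟩ := isCompact_Icc.exists_bound_of_continuousOn hA
  have hlip : ∀ t ∈ Icc a b, LipschitzOnWith (Real.toNNReal C) (A t *ᵥ ·) univ := by
    intro t ht
    refine LipschitzWith.lipschitzOnWith (LipschitzWith.of_dist_le' fun x y => ?_)
    rw [dist_eq_norm, dist_eq_norm, ← mulVec_sub]
    exact (linfty_opNorm_mulVec _ _).trans (by gcongr; exact hC t ht)
  have hzc : ContinuousOn z (Icc a b) := fun t ht => (hz t ht).continuousWithinAt
  have hzero : ∀ t s, HasDerivWithinAt (fun _ => 0) (A t *ᵥ (0 : ι → ℂ)) s t := fun t s => by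
    simpa only [mulVec_zero] using hasDerivWithinAt_const t s (0 : ι → ℂ)
  intro t ht
  rcases le_total t t₁ with h | h
  · refine ODE_solution_unique_of_mem_Icc_left
      (fun s hs => hlip s ⟨ht.1.trans hs.1.le, hs.2.trans ht₁.2⟩)
      (hzc.mono (Icc_subset_Icc ht.1 ht₁.2)) (fun s hs => ?_) (fun _ _ => mem_univ _)
      continuousOn_const (fun s _ => hzero s _) (fun _ _ => mem_univ _) hz₁ ⟨le_rfl, h⟩
    exact (hz s ⟨ht.1.trans hs.1.le, hs.2.trans ht₁.2⟩).mono_of_mem_nhdsWithin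
      (Icc_mem_nhdsLE_of_mem ⟨ht.1.trans_lt hs.1, hs.2.trans ht₁.2⟩)
  · refine ODE_solution_unique_of_mem_Icc_right
      (fun s hs => hlip s ⟨ht₁.1.trans hs.1, hs.2.le.trans ht.2⟩)
      (hzc.mono (Icc_subset_Icc ht₁.1 ht.2)) (fun s hs => ?_) (fun _ _ => mem_univ _)
      continuousOn_const (fun s _ => hzero s _) (fun _ _ => mem_univ _) hz₁ ⟨h, le_rfl⟩
    exact (hz s ⟨ht₁.1.trans hs.1, hs.2.le.trans ht.2⟩).mono_of_mem_nhdsWithin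
      (Icc_mem_nhdsGE_of_mem ⟨ht₁.1.trans hs.1, hs.2.trans_le ht.2⟩)

theorem hasDerivWithinAt_mulVec {Y : ℝ → Matrix ι ι ℂ} {Y' : Matrix ι ι ℂ}
    {u : ℝ → ι → ℂ} {u' : ι → ℂ} {S : Set ℝ} {t : ℝ}
    (hY : ∀ i j, HasDerivWithinAt (fun s => Y s i j) (Y' i j) S t)
    (hu : HasDerivWithinAt u u' S t) :
    HasDerivWithinAt (fun s => Y s *ᵥ u s) (Y' *ᵥ u t + Y t *ᵥ u') S t := by
  refine hasDerivWithinAt_pi.2 fun i => ?_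
  simp only [Pi.add_apply, mulVec, dotProduct, ← Finset.sum_add_distrib]
  exact HasDerivWithinAt.fun_sum fun j _ => (hY i j).mul (hasDerivWithinAt_pi.1 hu j)

variable [DecidableEq ι]

structure IsMatriciant (a b : ℝ) (A Y : ℝ → Matrix ι ι ℂ) (t₀ : ℝ) : Prop where
  hasDerivWithinAt : ∀ t ∈ Icc a b, ∀ i j,
    HasDerivWithinAt (fun s => Y s i j) (-(A t * Y t) i j) (Icc a b) t
  apply_t₀ : Y t₀ = 1

namespace IsMatriciant

variable {a b t₀ t : ℝ} {A Y : ℝ → Matrix ι ι ℂ}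

theorem continuousOn (hY : IsMatriciant a b A Y t₀) : ContinuousOn Y (Icc a b) :=
  continuousOn_pi.2 fun i => continuousOn_pi.2 fun j t ht =>
    (hY.hasDerivWithinAt t ht i j).continuousWithinAt

theorem hasDerivWithinAt_mulVec_apply (hY : IsMatriciant a b A Y t₀) (ht : t ∈ Icc a b)
    {u : ℝ → ι → ℂ} {u' : ι → ℂ} (hu : HasDerivWithinAt u u' (Icc a b) t) :
    HasDerivWithinAt (fun s => Y s *ᵥ u s) (-(A t *ᵥ (Y t *ᵥ u t)) + Y t *ᵥ u') (Icc a b) t := by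
  simpa only [neg_mulVec, mulVec_mulVec] using
    _root_.hasDerivWithinAt_mulVec (Y' := -(A t * Y t)) (hY.hasDerivWithinAt t ht) hu

theorem hasDerivWithinAt_mulVec_const (hY : IsMatriciant a b A Y t₀) (ht : t ∈ Icc a b)
    (c : ι → ℂ) :
    HasDerivWithinAt (fun s => Y s *ᵥ c) (-(A t *ᵥ (Y t *ᵥ c))) (Icc a b) t := by
  simpa using hY.hasDerivWithinAt_mulVec_apply ht (hasDerivWithinAt_const t _ c)

theorem eqOn_mulVec (hY : IsMatriciant a b A Y t₀) (hA : ContinuousOn A (Icc a b))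
    (ht₀ : t₀ ∈ Icc a b) {z : ℝ → ι → ℂ}
    (hz : ∀ t ∈ Icc a b, HasDerivWithinAt z (-(A t *ᵥ z t)) (Icc a b) t) :
    EqOn z (fun t => Y t *ᵥ z t₀) (Icc a b) := by
  have hw : ∀ t ∈ Icc a b, HasDerivWithinAt (fun s => z s - Y s *ᵥ z t₀)
      ((-A t) *ᵥ (z t - Y t *ᵥ z t₀)) (Icc a b) t := fun t ht => by
    simpa only [neg_mulVec, mulVec_sub, neg_sub_neg] using
      (hz t ht).fun_sub (hY.hasDerivWithinAt_mulVec_const ht (z t₀))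
  intro t ht
  refine sub_eq_zero.1 (eqOn_zero_of_hasDerivWithinAt_mulVec hA.neg hw ht₀ ?_ ht)
  simp [hY.apply_t₀]

theorem det_ne_zero (hY : IsMatriciant a b A Y t₀) (hA : ContinuousOn A (Icc a b))
    (ht₀ : t₀ ∈ Icc a b) (ht : t ∈ Icc a b) : (Y t).det ≠ 0 := by
  intro hdet
  obtain ⟨v, hv, hYv⟩ := exists_mulVec_eq_zero_iff.2 hdet
  have hz : EqOn (fun s => Y s *ᵥ v) 0 (Icc a b) :=
    eqOn_zero_of_hasDerivWithinAt_mulVec hA.neg (fun s hs => by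
      simpa only [Pi.neg_apply, neg_mulVec] using hY.hasDerivWithinAt_mulVec_const hs v) ht hYv
  simpa [hY.apply_t₀, hv] using hz ht₀

end IsMatriciant

end LinearODE

def boundaryMatrix {X R ι κ μ : Type*} [CommSemiring R] (B : (X → ι → R) →ₗ[R] (μ → R))
    (Y : X → Matrix ι κ R) : Matrix μ κ R :=
  Matrix.of fun i k => B (fun t j => Y t j k) i

theorem map_fun_mulVec {X R ι κ μ : Type*} [CommSemiring R] [Fintype κ]
    (B : (X → ι → R) →ₗ[R] (μ → R)) (Y : X → Matrix ι κ R) (c : κ → R) :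
    B (fun t => Y t *ᵥ c) = boundaryMatrix B Y *ᵥ c := by
  have hsum : (fun t => Y t *ᵥ c) = ∑ k, c k • fun t j => Y t j k := by
    ext t j
    simp [mulVec_apply_eq_sum, Finset.sum_apply, mul_comm]
  ext i
  simp [hsum, boundaryMatrix, mulVec_apply_eq_sum, Finset.sum_apply, mul_comm]

section BoundaryValueProblem

variable {a b α : ℝ} {n m : ℕ} {A Y : ℝ → Matrix (Fin m) (Fin m) ℂ} {t₀ : ℝ}
  {y z f g : ℝ → Fin m → ℂ} {B : (ℝ → Fin m → ℂ) →ₗ[ℂ] (Fin m → ℂ)}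

theorem solvesV_iff_hasDerivWithinAt (hab : a < b) (hy : DifferentiableOn ℝ y (Icc a b)) :
    SolvesV a b A y f ↔ ∀ t ∈ Icc a b, HasDerivWithinAt y (f t - A t *ᵥ y t) (Icc a b) t := by
  refine ⟨fun h t ht => hasDerivWithinAt_pi.2 fun i => ?_, fun h t ht i => ?_⟩
  · have hi := ((differentiableOn_pi.1 hy i) t ht).hasDerivWithinAt
    rwa [eq_sub_of_add_eq (h t ht i)] at hi
  · rw [Lop, ((hasDerivWithinAt_pi.1 (h t ht) i).derivWithin (uniqueDiffOn_Icc hab t ht)),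
      Pi.sub_apply, sub_add_cancel]

theorem SolvesV.add (hab : a < b) (hy : DifferentiableOn ℝ y (Icc a b))
    (hz : DifferentiableOn ℝ z (Icc a b)) (hyL : SolvesV a b A y f) (hzL : SolvesV a b A z g) :
    SolvesV a b A (y + z) (f + g) := by
  refine (solvesV_iff_hasDerivWithinAt hab (hy.add hz)).2 fun t ht => ?_
  refine (((solvesV_iff_hasDerivWithinAt hab hy).1 hyL t ht).add
    ((solvesV_iff_hasDerivWithinAt hab hz).1 hzL t ht)).congr_deriv ?_
  simp only [Pi.add_apply, mulVec_add]
  abel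

theorem SolvesV.sub (hab : a < b) (hy : DifferentiableOn ℝ y (Icc a b))
    (hz : DifferentiableOn ℝ z (Icc a b)) (hyL : SolvesV a b A y f) (hzL : SolvesV a b A z g) :
    SolvesV a b A (y - z) (f - g) := by
  refine (solvesV_iff_hasDerivWithinAt hab (hy.sub hz)).2 fun t ht => ?_
  refine (((solvesV_iff_hasDerivWithinAt hab hy).1 hyL t ht).sub
    ((solvesV_iff_hasDerivWithinAt hab hz).1 hzL t ht)).congr_deriv ?_
  simp only [Pi.sub_apply, mulVec_sub]
  abel

theorem inHolderV_solvesV_of_hasDerivWithinAt (hab : a < b) (hα : α ≤ 1)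
    (hA : InHolderM a b n α A) (hf : InHolderV a b n α f)
    (hy : ∀ t ∈ Icc a b, HasDerivWithinAt y (f t - A t *ᵥ y t) (Icc a b) t) :
    InHolderV a b (n + 1) α y ∧ SolvesV a b A y f :=
  have hyH := inHolderV_succ_of_hasDerivWithinAt hab hα hA hf hy
  ⟨hyH, (solvesV_iff_hasDerivWithinAt hab hyH.differentiableOn).2 hy⟩

namespace IsMatriciant

theorem inHolderV_solvesV_mulVec (hY : IsMatriciant a b A Y t₀) (hab : a < b) (hα : α ≤ 1)
    (hA : InHolderM a b n α A) (c : Fin m → ℂ) :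
    InHolderV a b (n + 1) α (fun t => Y t *ᵥ c) ∧ SolvesV a b A (fun t => Y t *ᵥ c) 0 :=
  inHolderV_solvesV_of_hasDerivWithinAt hab hα hA (fun _ => inHolder_const hab hα 0)
    fun t ht => by simpa using hY.hasDerivWithinAt_mulVec_const ht c

theorem exists_inHolderV_solvesV (hY : IsMatriciant a b A Y t₀) (hab : a < b) (hα : α ≤ 1)
    (hA : InHolderM a b n α A) (ht₀ : t₀ ∈ Icc a b) (hf : InHolderV a b n α f) :
    ∃ y, InHolderV a b (n + 1) α y ∧ SolvesV a b A y f := by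
  have hdet : ∀ t ∈ Icc a b, (Y t).det ≠ 0 := fun t ht => hY.det_ne_zero hA.continuousOn ht₀ ht
  have hYinv : ContinuousOn (fun t => (Y t)⁻¹) (Icc a b) := fun t ht =>
    (continuousAt_matrix_inv _ (NormedRing.inverse_continuousAt (Units.mk0 _ (hdet t ht)))
      ).comp_continuousWithinAt (hY.continuousOn t ht)
  obtain ⟨G, hG⟩ := exists_forall_hasDerivWithinAt_Icc (ht₀.1.trans ht₀.2)
    (hYinv.matrix_mulVec hf.continuousOn)
  refine ⟨fun t => Y t *ᵥ G t, inHolderV_solvesV_of_hasDerivWithinAt hab hα hA hf fun t ht => ?_⟩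
  convert hY.hasDerivWithinAt_mulVec_apply ht (hG t ht) using 1
  rw [mulVec_mulVec (f t), mul_nonsing_inv _ (isUnit_iff_ne_zero.2 (hdet t ht)), one_mulVec,
    neg_add_eq_sub]

theorem eqOn_mulVec_of_solvesV_zero (hY : IsMatriciant a b A Y t₀) (hab : a < b)
    (hA : ContinuousOn A (Icc a b)) (ht₀ : t₀ ∈ Icc a b) (hy : DifferentiableOn ℝ y (Icc a b))
    (hyL : SolvesV a b A y 0) : EqOn y (fun t => Y t *ᵥ y t₀) (Icc a b) :=
  hY.eqOn_mulVec hA ht₀ fun t ht => by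
    simpa using (solvesV_iff_hasDerivWithinAt hab hy).1 hyL t ht

end IsMatriciant

theorem map_eq_boundaryMatrix_mulVec (hab : a < b) (hα : α ≤ 1) (hA : InHolderM a b n α A)
    (hY : IsMatriciant a b A Y t₀) (ht₀ : t₀ ∈ Icc a b) (hB : BoundedOnHolder a b (n + 1) α B)
    (hy : InHolderV a b (n + 1) α y) (hyL : SolvesV a b A y 0) :
    B y = boundaryMatrix B Y *ᵥ y t₀ := by
  rw [← map_fun_mulVec, ← sub_eq_zero, ← map_sub]
  refine hB.map_eq_zero hab
    (hy.sub hab (hY.inHolderV_solvesV_mulVec hab hα hA _).1) fun t ht => ?_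
  exact sub_eq_zero.2 (hY.eqOn_mulVec_of_solvesV_zero hab hA.continuousOn ht₀
    hy.differentiableOn hyL ht)

theorem eqOn_zero_of_solvesV_zero (hab : a < b) (hα : α ≤ 1) (hA : InHolderM a b n α A)
    (hY : IsMatriciant a b A Y t₀) (ht₀ : t₀ ∈ Icc a b) (hB : BoundedOnHolder a b (n + 1) α B)
    (hdet : (boundaryMatrix B Y).det ≠ 0) (hy : InHolderV a b (n + 1) α y)
    (hyL : SolvesV a b A y 0) (hyB : B y = 0) : EqOn y 0 (Icc a b) := by
  have hy₀ : y t₀ = 0 := mulVec_injective_iff_isUnit.2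
    ((isUnit_iff_isUnit_det _).2 (isUnit_iff_ne_zero.2 hdet))
    (by rw [← map_eq_boundaryMatrix_mulVec hab hα hA hY ht₀ hB hy hyL, hyB, mulVec_zero])
  intro t ht
  simpa [hy₀] using
    hY.eqOn_mulVec_of_solvesV_zero hab hA.continuousOn ht₀ hy.differentiableOn hyL ht

theorem exists_solvesV_map_eq (hab : a < b) (hα : α ≤ 1) (hA : InHolderM a b n α A)
    (hY : IsMatriciant a b A Y t₀) (ht₀ : t₀ ∈ Icc a b) (hdet : (boundaryMatrix B Y).det ≠ 0)
    (hf : InHolderV a b n α f) (q : Fin m → ℂ) :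
    ∃ y, InHolderV a b (n + 1) α y ∧ SolvesV a b A y f ∧ B y = q := by
  obtain ⟨y₀, hy₀, hy₀L⟩ := hY.exists_inHolderV_solvesV hab hα hA ht₀ hf
  set c := (boundaryMatrix B Y)⁻¹ *ᵥ (q - B y₀)
  obtain ⟨hYc, hYcL⟩ := hY.inHolderV_solvesV_mulVec hab hα hA c
  refine ⟨y₀ + fun t => Y t *ᵥ c, hy₀.add hab hYc, ?_, ?_⟩
  · simpa using hy₀L.add hab hy₀.differentiableOn hYc.differentiableOn hYcL
  · rw [map_add, map_fun_mulVec, mulVec_mulVec, mul_nonsing_inv _ (isUnit_iff_ne_zero.2 hdet),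
      one_mulVec, add_sub_cancel]

end BoundaryValueProblem

theorem statement3_general (a b : ℝ) (hab : a < b) (n m : ℕ)
    (α : ℝ) (hα1 : α ≤ 1)
    (A : ℝ → Matrix (Fin m) (Fin m) ℂ) (hA : InHolderM a b n α A)
    (B : (ℝ → Fin m → ℂ) →ₗ[ℂ] (Fin m → ℂ))
    (hB : ∃ K : ℝ, ∀ y : ℝ → Fin m → ℂ, InHolderV a b (n + 1) α y →
      ‖B y‖ ≤ K * holderNormV a b (n + 1) α y)
    (t₀ : ℝ) (ht₀ : t₀ ∈ Set.Icc a b)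
    (Y : ℝ → Matrix (Fin m) (Fin m) ℂ) (hY : InHolderM a b (n + 1) α Y)
    (hYode : ∀ t ∈ Set.Icc a b, ∀ i j,
      derivWithin (fun s => Y s i j) (Set.Icc a b) t = -((A t * Y t) i j))
    (hYinit : Y t₀ = 1) :
    (∀ f : ℝ → Fin m → ℂ, ∀ q : Fin m → ℂ, InHolderV a b n α f →
      ∃ y : ℝ → Fin m → ℂ, InHolderV a b (n + 1) α y ∧ SolvesV a b A y f ∧ B y = q ∧
        ∀ y' : ℝ → Fin m → ℂ, InHolderV a b (n + 1) α y' → SolvesV a b A y' f → B y' = q →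
          Set.EqOn y' y (Set.Icc a b)) ↔
    Matrix.det (Matrix.of fun i k => B (fun t j => Y t j k) i) ≠ 0 := by
  have hYm : IsMatriciant a b A Y t₀ := ⟨fun t ht i j => hYode t ht i j ▸
    ((hY i j).1.differentiableOn (by simp) t ht).hasDerivWithinAt, hYinit⟩
  change _ ↔ (boundaryMatrix B Y).det ≠ 0
  constructor
  · intro hsolv hdet
    obtain ⟨v, hv, hBYv⟩ := exists_mulVec_eq_zero_iff.2 hdet
    obtain ⟨y, -, -, -, huniq⟩ := hsolv 0 0 fun _ => inHolder_const hab hα1 0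
    have hcol : ∀ c, boundaryMatrix B Y *ᵥ c = 0 → Y t₀ *ᵥ c = y t₀ := fun c hc =>
      have ⟨hYc, hYcL⟩ := hYm.inHolderV_solvesV_mulVec hab hα1 hA c
      huniq _ hYc hYcL (by rw [map_fun_mulVec, hc]) ht₀
    exact hv (by simpa [hYinit] using (hcol v hBYv).trans (hcol 0 (mulVec_zero _)).symm)
  · intro hdet f q hf
    obtain ⟨y, hy, hyL, hyB⟩ := exists_solvesV_map_eq hab hα1 hA hYm ht₀ hdet hf q
    refine ⟨y, hy, hyL, hyB, fun y' hy' hy'L hy'B t ht => sub_eq_zero.1 ?_⟩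
    refine eqOn_zero_of_solvesV_zero hab hα1 hA hYm ht₀ hB hdet (hy'.sub hab hy) ?_
      (by rw [map_sub, hy'B, hyB, sub_self]) ht
    simpa using hy'L.sub hab hy'.differentiableOn hy.differentiableOn hyL

/-- Theorem 3.4: with `Y` the matriciant of the system relative to `t₀`
(`Y' = -AY`, `Y(t₀) = I_m`) and `[BY]` the numerical matrix obtained by applying `B` to the
columns of `Y`, the operator `(L,B)` is invertible (i.e. the problem `Ly = f`, `By = q` is
uniquely solvable for all data) if and only if `det [BY] ≠ 0`. -/
theorem statement3 (a b : ℝ) (hab : a < b) (n m : ℕ) (hm : 1 ≤ m)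
    (α : ℝ) (hα0 : 0 ≤ α) (hα1 : α ≤ 1)
    (A : ℝ → Matrix (Fin m) (Fin m) ℂ) (hA : InHolderM a b n α A)
    (B : (ℝ → Fin m → ℂ) →ₗ[ℂ] (Fin m → ℂ))
    (hB : ∃ K : ℝ, ∀ y : ℝ → Fin m → ℂ, InHolderV a b (n + 1) α y →
      ‖B y‖ ≤ K * holderNormV a b (n + 1) α y)
    (t₀ : ℝ) (ht₀ : t₀ ∈ Set.Icc a b)
    (Y : ℝ → Matrix (Fin m) (Fin m) ℂ) (hY : InHolderM a b (n + 1) α Y)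
    (hYode : ∀ t ∈ Set.Icc a b, ∀ i j,
      derivWithin (fun s => Y s i j) (Set.Icc a b) t = -((A t * Y t) i j))
    (hYinit : Y t₀ = 1) :
    (∀ f : ℝ → Fin m → ℂ, ∀ q : Fin m → ℂ, InHolderV a b n α f →
      ∃ y : ℝ → Fin m → ℂ, InHolderV a b (n + 1) α y ∧ SolvesV a b A y f ∧ B y = q ∧
        ∀ y' : ℝ → Fin m → ℂ, InHolderV a b (n + 1) α y' → SolvesV a b A y' f → B y' = q →
          Set.EqOn y' y (Set.Icc a b)) ↔
    Matrix.det (Matrix.of fun i k => B (fun t j => Y t j k) i) ≠ 0 :=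
  statement3_general a b hab n m α hα1 A hA B hB t₀ ht₀ Y hY hYode hYinit
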